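/- arXiv:1107.3265 — 6 statements merged into one kernel-verified Lean document; each statement's English description precedes it below -/
import Mathlib

section
/- Let η be a numerical submeasure on a ring Σ. For λ > 0 and E ∈ Σ define γ_E(x) = 1 − exp(−x/(λ·η(E))) for x > 0 (with the convention 0/0 = 0, so γ_E = ε_0 when η(E)=0). Then γ is a τ_M-submeasure, i.e., γ_∅ = ε_0, γ is antitone under inclusion, and γ_{E∪F}(x+y) ≥ min(γ_E(x), γ_F(y)) for all x,y > 0. -/
open Set
open scoped ENNReal Classical

noncomputable section

def eps0 (x : ℝ) : ℝ := if 0 < x then 1 else 0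

def IsDistrFn (F : ℝ → ℝ) : Prop :=
  Monotone F ∧ (∀ x, x ≤ 0 → F x = 0) ∧ (∀ x, F x ≤ 1)

def IsSetRing {Ω : Type*} (R : Set (Set Ω)) : Prop :=
  ∅ ∈ R ∧ (∀ E F : Set Ω, E ∈ R → F ∈ R → E ∪ F ∈ R) ∧
    (∀ E F : Set Ω, E ∈ R → F ∈ R → E \ F ∈ R)

def IsNumSubmeasure {Ω : Type*} (R : Set (Set Ω)) (η : Set Ω → ℝ≥0∞) : Prop :=
  η ∅ = 0 ∧ (∀ E F : Set Ω, E ∈ R → F ∈ R → E ⊆ F → η E ≤ η F) ∧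
    (∀ E F : Set Ω, E ∈ R → F ∈ R → η (E ∪ F) ≤ η E + η F)

/-- `γ` is a `τ_{L,A}`-submeasure on the ring `R`. -/
def IsTauSub {Ω : Type*} (R : Set (Set Ω)) (L : ℝ → ℝ → ℝ) (A : ℝ → ℝ → ℝ)
    (γ : Set Ω → ℝ → ℝ) : Prop :=
  (∀ E, E ∈ R → IsDistrFn (γ E)) ∧
  (∀ x, γ ∅ x = eps0 x) ∧
  (∀ E F : Set Ω, E ∈ R → F ∈ R → E ⊆ F → ∀ x, γ F x ≤ γ E x) ∧
  (∀ E F : Set Ω, E ∈ R → F ∈ R → ∀ x y : ℝ, 0 < x → 0 < y →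
    A (γ E x) (γ F y) ≤ γ (E ∪ F) (L x y))

def IsTnorm (T : ℝ → ℝ → ℝ) : Prop :=
  (∀ u v, T u v = T v u) ∧ (∀ u v w, T (T u v) w = T u (T v w)) ∧
  (∀ u u' v, u ∈ Icc (0:ℝ) 1 → u' ∈ Icc (0:ℝ) 1 → v ∈ Icc (0:ℝ) 1 → u ≤ u' →
    T u v ≤ T u' v) ∧
  (∀ u ∈ Icc (0:ℝ) 1, T u 1 = u) ∧
  (∀ u v, u ∈ Icc (0:ℝ) 1 → v ∈ Icc (0:ℝ) 1 → T u v ∈ Icc (0:ℝ) 1)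

/-!
For `x > 0` the value `1 - exp (-(x / (λ η(E))))` is increasing in the rate `x / (λ η(E))`, so
it is monotone in `x` and antitone in `η(E)`; the cases `η(E) = 0` and `η(E) = ∞` are the limiting
rates `∞` and `0`. The triangle inequality follows from
subadditivity of `η` and the mediant inequality `min (x / p) (y / q) ≤ (x + y) / (p + q)`.
-/

lemma min_div_le_add_div_add {K : Type*} [Field K] [LinearOrder K] [IsStrictOrderedRing K]
    {x y p q : K} (hp : 0 < p) (hq : 0 < q) :
    min (x / p) (y / q) ≤ (x + y) / (p + q) := by
  rw [le_div_iff₀ (add_pos hp hq), mul_add]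
  exact add_le_add ((le_div_iff₀ hp).1 (min_le_left _ _)) ((le_div_iff₀ hq).1 (min_le_right _ _))

lemma monotone_one_sub_exp_neg : Monotone fun u : ℝ => 1 - Real.exp (-u) :=
  fun _ _ h => sub_le_sub_left (Real.exp_le_exp.2 (neg_le_neg h)) 1

/-- For `a = ∞` we get `a.toReal = 0`, and the junk value `x / 0 = 0` gives the correct value `0`
at every `x > 0`. -/
def expDistr (lam : ℝ) (a : ℝ≥0∞) (x : ℝ) : ℝ :=
  if x ≤ 0 then 0 else if a = 0 then 1 else 1 - Real.exp (-(x / (lam * a.toReal)))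

section expDistr

variable {lam : ℝ} {a b : ℝ≥0∞} {x y : ℝ}

lemma expDistr_of_nonpos (hx : x ≤ 0) : expDistr lam a x = 0 := if_pos hx

lemma expDistr_zero (hx : 0 < x) : expDistr lam 0 x = 1 := by
  simp [expDistr, hx.not_ge]

lemma expDistr_of_ne_zero (hx : 0 < x) (ha : a ≠ 0) :
    expDistr lam a x = 1 - Real.exp (-(x / (lam * a.toReal))) := by
  simp [expDistr, hx.not_ge, ha]

lemma expDistr_top (hx : 0 < x) : expDistr lam ⊤ x = 0 := by
  simp [expDistr_of_ne_zero hx ENNReal.top_ne_zero]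

lemma expDistr_zero_eq_eps0 : expDistr lam 0 = eps0 := by
  ext x
  rcases le_or_gt x 0 with hx | hx
  · simp [expDistr_of_nonpos hx, eps0, hx.not_gt]
  · simp [expDistr_zero hx, eps0, hx]

lemma expDistr_le_one : expDistr lam a x ≤ 1 := by
  unfold expDistr
  split_ifs
  · exact zero_le_one
  · exact le_rfl
  · exact sub_le_self _ (Real.exp_pos _).le

lemma expDistr_nonneg (hlam : 0 ≤ lam) : 0 ≤ expDistr lam a x := by
  rcases le_or_gt x 0 with hx | hx
  · exact (expDistr_of_nonpos hx).ge
  rcases eq_or_ne a 0 with rfl | ha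
  · exact (expDistr_zero hx).ge.trans' zero_le_one
  rw [expDistr_of_ne_zero hx ha, sub_nonneg, Real.exp_le_one_iff, neg_nonpos]
  positivity

lemma monotone_expDistr (hlam : 0 ≤ lam) : Monotone (expDistr lam a) := by
  intro x y hxy
  rcases le_or_gt x 0 with hx | hx
  · exact (expDistr_of_nonpos hx).trans_le (expDistr_nonneg hlam)
  have hy := hx.trans_le hxy
  rcases eq_or_ne a 0 with rfl | ha
  · rw [expDistr_zero hx, expDistr_zero hy]
  rw [expDistr_of_ne_zero hx ha, expDistr_of_ne_zero hy ha]
  exact monotone_one_sub_exp_neg (div_le_div_of_nonneg_right hxy (by positivity))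

lemma isDistrFn_expDistr (hlam : 0 ≤ lam) : IsDistrFn (expDistr lam a) :=
  ⟨monotone_expDistr hlam, fun _ => expDistr_of_nonpos, fun _ => expDistr_le_one⟩

lemma antitone_expDistr (hlam : 0 < lam) (x : ℝ) : Antitone fun a => expDistr lam a x := by
  intro a b hab
  dsimp only
  rcases le_or_gt x 0 with hx | hx
  · simp only [expDistr_of_nonpos hx, le_refl]
  rcases eq_or_ne a 0 with rfl | ha
  · exact (expDistr_zero hx).symm ▸ expDistr_le_one
  rcases eq_or_ne b ⊤ with rfl | hb
  · exact (expDistr_top hx).trans_le (expDistr_nonneg hlam.le)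
  have hpos : 0 < a.toReal := ENNReal.toReal_pos ha (ne_top_of_le_ne_top hb hab)
  rw [expDistr_of_ne_zero hx ha, expDistr_of_ne_zero hx (ne_bot_of_le_ne_bot ha hab)]
  refine monotone_one_sub_exp_neg (div_le_div_of_nonneg_left hx.le (by positivity) ?_)
  exact mul_le_mul_of_nonneg_left (ENNReal.toReal_mono hb hab) hlam.le

lemma min_expDistr_le_expDistr_add (hlam : 0 < lam) (hx : 0 < x) (hy : 0 < y) :
    min (expDistr lam a x) (expDistr lam b y) ≤ expDistr lam (a + b) (x + y) := by
  rcases eq_or_ne a 0 with rfl | ha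
  · rw [zero_add]
    exact (min_le_right _ _).trans (monotone_expDistr hlam.le (by linarith))
  rcases eq_or_ne b 0 with rfl | hb
  · rw [add_zero]
    exact (min_le_left _ _).trans (monotone_expDistr hlam.le (by linarith))
  rcases eq_or_ne a ⊤ with rfl | ha'
  · exact (min_le_left _ _).trans ((expDistr_top hx).trans_le (expDistr_nonneg hlam.le))
  rcases eq_or_ne b ⊤ with rfl | hb'
  · exact (min_le_right _ _).trans ((expDistr_top hy).trans_le (expDistr_nonneg hlam.le))
  have hp := ENNReal.toReal_pos ha ha'
  have hq := ENNReal.toReal_pos hb hb'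
  rw [expDistr_of_ne_zero hx ha, expDistr_of_ne_zero hy hb,
    expDistr_of_ne_zero (add_pos hx hy) (by simp [ha]), ENNReal.toReal_add ha' hb', mul_add,
    ← monotone_one_sub_exp_neg.map_min]
  exact monotone_one_sub_exp_neg (min_div_le_add_div_add (by positivity) (by positivity))

end expDistr

theorem stmt1_general {Ω : Type*} (R : Set (Set Ω))
    (η : Set Ω → ℝ≥0∞) (hη : IsNumSubmeasure R η) (lam : ℝ) (hlam : 0 < lam) :
    IsTauSub R (· + ·) (fun u v => min u v)
      (fun E x => if x ≤ 0 then 0 else if η E = 0 then 1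
        else 1 - Real.exp (-(x / (lam * (η E).toReal)))) := by
  obtain ⟨hη_empty, hη_mono, hη_subadd⟩ := hη
  change IsTauSub R _ _ fun E => expDistr lam (η E)
  refine ⟨fun E _ => isDistrFn_expDistr hlam.le, fun x => ?_, fun E F hE hF hEF x => ?_,
    fun E F hE hF x y hx hy => ?_⟩
  · show expDistr lam (η ∅) x = eps0 x
    rw [hη_empty, expDistr_zero_eq_eps0]
  · exact antitone_expDistr hlam x (hη_mono E F hE hF hEF)
  · exact (min_expDistr_le_expDistr_add hlam hx hy).trans
      (antitone_expDistr hlam _ (hη_subadd E F hE hF))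

/-- the exponential-type distribution functions built from a numerical
submeasure `η` form a `τ_M`-submeasure. -/
theorem stmt1 {Ω : Type*} (R : Set (Set Ω)) (hR : IsSetRing R)
    (η : Set Ω → ℝ≥0∞) (hη : IsNumSubmeasure R η) (lam : ℝ) (hlam : 0 < lam) :
    IsTauSub R (· + ·) (fun u v => min u v)
      (fun E x => if x ≤ 0 then 0 else if η E = 0 then 1
        else 1 - Real.exp (-(x / (lam * (η E).toReal)))) :=
  stmt1_general R η hη lam hlam
end
end

section
/- Let h : [0,1] → [0,1] be an increasing bijection such that the function x ↦ 1 − h(1−x) is subadditive on [0,1]. Then Ψ_h W ≤ W pointwise, where W(u,v) = max(u+v−1, 0); consequently every τ_{L₁,W}-submeasure is a τ_{L₂, Ψ_h W}-submeasure whenever L₁ ≤ L₂ pointwise. -/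
/-!
Subadditivity of `x ↦ 1 - h (1 - x)` at `1 - u, 1 - v` reads `h u + h v - 1 ≤ h (u + v - 1)`,
i.e. `W (h u) (h v) ≤ h (W u v)` when `u + v ≥ 1`; when `u + v ≤ 1`, subadditivity at `v, 1 - v`
and monotonicity give `h u + h v ≤ h (1 - v) + h v ≤ 1`. Applying the increasing inverse `g`
gives `Ψ_h W ≤ W`. Since `γ (E ∪ F)` is nondecreasing, the `τ_{L₁,W}` inequality then yields
the `τ_{L₂,Ψ_h W}` one.
-/

open Set
open scoped ENNReal Classical

noncomputable section

section Dual

variable {h : ℝ → ℝ}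
  (hsub : ∀ x y : ℝ, 0 ≤ x → 0 ≤ y → x + y ≤ 1 →
    1 - h (1 - (x + y)) ≤ (1 - h (1 - x)) + (1 - h (1 - y)))
include hsub

theorem add_sub_one_le_of_subadditive_dual {u v : ℝ} (hu : u ≤ 1) (hv : v ≤ 1)
    (huv : 1 ≤ u + v) : h u + h v - 1 ≤ h (u + v - 1) := by
  have := hsub (1 - u) (1 - v) (by linarith) (by linarith) (by linarith)
  rw [show 1 - (1 - u + (1 - v)) = u + v - 1 by ring, sub_sub_cancel, sub_sub_cancel] at this
  linarith

theorem add_le_one_of_subadditive_dual (h0 : h 0 = 0) (hmono : MonotoneOn h (Icc 0 1))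
    {u v : ℝ} (hu : u ∈ Icc (0 : ℝ) 1) (hv : v ∈ Icc (0 : ℝ) 1) (huv : u + v ≤ 1) :
    h u + h v ≤ 1 := by
  have hcompl := hsub v (1 - v) hv.1 (by linarith [hv.2]) (by linarith)
  rw [add_sub_cancel, sub_self, h0, sub_sub_cancel] at hcompl
  have hu_le : h u ≤ h (1 - v) := hmono hu ⟨by linarith [hv.2], by linarith [hv.1]⟩ (by linarith)
  linarith

theorem conj_lukasiewicz_le {g : ℝ → ℝ} (h0 : h 0 = 0) (hmono : MonotoneOn h (Icc 0 1))
    (hmaps : MapsTo h (Icc 0 1) (Icc 0 1)) (hgh : ∀ x ∈ Icc (0 : ℝ) 1, g (h x) = x)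
    (hgmono : MonotoneOn g (Icc 0 1)) {u v : ℝ} (hu : u ∈ Icc (0 : ℝ) 1)
    (hv : v ∈ Icc (0 : ℝ) 1) :
    g (max (h u + h v - 1) 0) ≤ max (u + v - 1) 0 := by
  have hw : max (u + v - 1) 0 ∈ Icc (0 : ℝ) 1 :=
    ⟨le_max_right _ _, max_le (by linarith [hu.2, hv.2]) zero_le_one⟩
  have hle : h u + h v - 1 ≤ h (max (u + v - 1) 0) := by
    rcases le_total (u + v) 1 with huv | huv
    · rw [max_eq_right (by linarith), h0]
      linarith [add_le_one_of_subadditive_dual hsub h0 hmono hu hv huv]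
    · rw [max_eq_left (by linarith)]
      exact add_sub_one_le_of_subadditive_dual hsub hu.2 hv.2 huv
  have hmax_le : max (h u + h v - 1) 0 ≤ h (max (u + v - 1) 0) := max_le hle (hmaps hw).1
  calc g (max (h u + h v - 1) 0) ≤ g (h (max (u + v - 1) 0)) :=
        hgmono ⟨le_max_right _ _, hmax_le.trans (hmaps hw).2⟩ (hmaps hw) hmax_le
    _ = max (u + v - 1) 0 := hgh _ hw

end Dual

theorem IsDistrFn.mem_Icc {F : ℝ → ℝ} (hF : IsDistrFn F) (x : ℝ) : F x ∈ Icc (0 : ℝ) 1 := by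
  refine ⟨?_, hF.2.2 x⟩
  rcases le_total x 0 with hx | hx
  · exact (hF.2.1 x hx).ge
  · exact (hF.2.1 0 le_rfl).ge.trans (hF.1 hx)

theorem IsTauSub.mono {Ω : Type*} {R : Set (Set Ω)} {L₁ L₂ A A' : ℝ → ℝ → ℝ}
    {γ : Set Ω → ℝ → ℝ} (hγ : IsTauSub R L₁ A γ)
    (hR : ∀ E F : Set Ω, E ∈ R → F ∈ R → E ∪ F ∈ R) (hL : ∀ x y, L₁ x y ≤ L₂ x y)
    (hA : ∀ u ∈ Icc (0 : ℝ) 1, ∀ v ∈ Icc (0 : ℝ) 1, A' u v ≤ A u v) :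
    IsTauSub R L₂ A' γ := by
  obtain ⟨hdistr, hempty, hanti, hunion⟩ := hγ
  refine ⟨hdistr, hempty, hanti, fun E F hE hF x y hx hy => ?_⟩
  calc A' (γ E x) (γ F y) ≤ A (γ E x) (γ F y) :=
        hA _ ((hdistr E hE).mem_Icc x) _ ((hdistr F hF).mem_Icc y)
    _ ≤ γ (E ∪ F) (L₁ x y) := hunion E F hE hF x y hx hy
    _ ≤ γ (E ∪ F) (L₂ x y) := (hdistr _ (hR E F hE hF)).1 (hL x y)

theorem stmt11_general (h g : ℝ → ℝ)
    (hmono : StrictMonoOn h (Icc 0 1)) (h0 : h 0 = 0)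
    (hmaps : MapsTo h (Icc 0 1) (Icc 0 1))
    (hgh : ∀ x ∈ Icc (0:ℝ) 1, g (h x) = x)
    (hgmono : MonotoneOn g (Icc 0 1))
    (hsub : ∀ x y : ℝ, 0 ≤ x → 0 ≤ y → x + y ≤ 1 →
      1 - h (1 - (x + y)) ≤ (1 - h (1 - x)) + (1 - h (1 - y))) :
    (∀ u ∈ Icc (0:ℝ) 1, ∀ v ∈ Icc (0:ℝ) 1,
      g (max (h u + h v - 1) 0) ≤ max (u + v - 1) 0) ∧
    (∀ (Ω : Type) (R : Set (Set Ω)) (L₁ L₂ : ℝ → ℝ → ℝ), IsSetRing R →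
      (∀ x y, L₁ x y ≤ L₂ x y) → ∀ γ : Set Ω → ℝ → ℝ,
        IsTauSub R L₁ (fun u v => max (u + v - 1) 0) γ →
          IsTauSub R L₂ (fun u v => g (max (h u + h v - 1) 0)) γ) := by
  have hW : ∀ u ∈ Icc (0:ℝ) 1, ∀ v ∈ Icc (0:ℝ) 1,
      g (max (h u + h v - 1) 0) ≤ max (u + v - 1) 0 := fun u hu v hv =>
    conj_lukasiewicz_le hsub h0 hmono.monotoneOn hmaps hgh hgmono hu hv
  exact ⟨hW, fun Ω R L₁ L₂ hR hL γ hγ => hγ.mono hR.2.1 hL hW⟩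

/-- if `x ↦ 1 - h(1-x)` is subadditive for an increasing automorphism `h`
of `[0,1]` (with inverse `g`), then `Ψ_h W ≤ W` on `[0,1]²`, and consequently every
`τ_{L₁,W}`-submeasure is a `τ_{L₂,Ψ_h W}`-submeasure whenever `L₁ ≤ L₂`. -/
theorem stmt11 (h g : ℝ → ℝ)
    (hmono : StrictMonoOn h (Icc 0 1)) (h0 : h 0 = 0) (h1 : h 1 = 1)
    (hmaps : MapsTo h (Icc 0 1) (Icc 0 1))
    (hgh : ∀ x ∈ Icc (0:ℝ) 1, g (h x) = x) (hhg : ∀ y ∈ Icc (0:ℝ) 1, h (g y) = y)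
    (hgmono : MonotoneOn g (Icc 0 1)) (hgmaps : MapsTo g (Icc 0 1) (Icc 0 1))
    (hsub : ∀ x y : ℝ, 0 ≤ x → 0 ≤ y → x + y ≤ 1 →
      1 - h (1 - (x + y)) ≤ (1 - h (1 - x)) + (1 - h (1 - y))) :
    (∀ u ∈ Icc (0:ℝ) 1, ∀ v ∈ Icc (0:ℝ) 1,
      g (max (h u + h v - 1) 0) ≤ max (u + v - 1) 0) ∧
    (∀ (Ω : Type) (R : Set (Set Ω)) (L₁ L₂ : ℝ → ℝ → ℝ), IsSetRing R →
      (∀ x y, L₁ x y ≤ L₂ x y) → ∀ γ : Set Ω → ℝ → ℝ,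
        IsTauSub R L₁ (fun u v => max (u + v - 1) 0) γ →
          IsTauSub R L₂ (fun u v => g (max (h u + h v - 1) 0)) γ) :=
  stmt11_general h g hmono h0 hmaps hgh hgmono hsub
end
end

section
/- Let T be a t-norm, L a commutative associative operation on [0,∞], and γ a τ_{L,T}-submeasure on a ring Σ. Define ρ : Σ × Σ → Δ⁺ by ρ(E,F) = γ_{E △ F} (symmetric difference). Then ρ satisfies the probabilistic triangle inequality ρ(E,F)(L(x,y)) ≥ T(ρ(E,G)(x), ρ(G,F)(y)) for all E,F,G ∈ Σ and x,y > 0, and ρ is translation invariant: ρ(E,F) = ρ(E △ G, F △ G) for all G ∈ Σ. -/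
open Set
open scoped ENNReal Classical

noncomputable section

theorem IsSetRing.symmDiff_mem {Ω : Type*} {R : Set (Set Ω)} (hR : IsSetRing R)
    {E F : Set Ω} (hE : E ∈ R) (hF : F ∈ R) : symmDiff E F ∈ R := by
  rw [symmDiff_def]
  exact hR.2.1 _ _ (hR.2.2 _ _ hE hF) (hR.2.2 _ _ hF hE)

theorem IsTauSub.le_of_subset_union {Ω : Type*} {R : Set (Set Ω)} (hR : IsSetRing R)
    {L A : ℝ → ℝ → ℝ} {γ : Set Ω → ℝ → ℝ} (hγ : IsTauSub R L A γ)
    {E F G : Set Ω} (hE : E ∈ R) (hF : F ∈ R) (hG : G ∈ R) (hsub : E ⊆ F ∪ G)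
    {x y : ℝ} (hx : 0 < x) (hy : 0 < y) :
    A (γ F x) (γ G y) ≤ γ E (L x y) :=
  calc A (γ F x) (γ G y) ≤ γ (F ∪ G) (L x y) := hγ.2.2.2 F G hF hG x y hx hy
    _ ≤ γ E (L x y) := hγ.2.2.1 E (F ∪ G) hE (hR.2.1 F G hF hG) hsub _

theorem symmDiff_symmDiff_symmDiff_cancel_right {α : Type*} [GeneralizedBooleanAlgebra α]
    (a b c : α) : symmDiff (symmDiff a c) (symmDiff b c) = symmDiff a b := by
  rw [symmDiff_symmDiff_symmDiff_comm, symmDiff_self, symmDiff_bot]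

theorem stmt15_general {Ω : Type*} (R : Set (Set Ω)) (hR : IsSetRing R)
    (T : ℝ → ℝ → ℝ)
    (L : ℝ → ℝ → ℝ)
    (γ : Set Ω → ℝ → ℝ) (hγ : IsTauSub R L T γ) :
    (∀ E F G : Set Ω, E ∈ R → F ∈ R → G ∈ R → ∀ x y : ℝ, 0 < x → 0 < y →
      T (γ (symmDiff E G) x) (γ (symmDiff G F) y) ≤ γ (symmDiff E F) (L x y)) ∧
    (∀ E F G : Set Ω, γ (symmDiff E F) = γ (symmDiff (symmDiff E G) (symmDiff F G))) := by
  refine ⟨fun E F G hE hF hG x y hx hy => ?_, fun E F G => ?_⟩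
  · exact hγ.le_of_subset_union hR (hR.symmDiff_mem hE hF) (hR.symmDiff_mem hE hG)
      (hR.symmDiff_mem hG hF) (symmDiff_triangle E G F) hx hy
  · rw [symmDiff_symmDiff_symmDiff_cancel_right]

/-- `ρ(E,F) = γ_{E ∆ F}` satisfies the probabilistic triangle inequality
and is translation invariant. -/
theorem stmt15 {Ω : Type*} (R : Set (Set Ω)) (hR : IsSetRing R)
    (T : ℝ → ℝ → ℝ) (hT : IsTnorm T)
    (L : ℝ → ℝ → ℝ) (hLcomm : ∀ x y, L x y = L y x)
    (hLassoc : ∀ x y z, L (L x y) z = L x (L y z))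
    (γ : Set Ω → ℝ → ℝ) (hγ : IsTauSub R L T γ) :
    (∀ E F G : Set Ω, E ∈ R → F ∈ R → G ∈ R → ∀ x y : ℝ, 0 < x → 0 < y →
      T (γ (symmDiff E G) x) (γ (symmDiff G F) y) ≤ γ (symmDiff E F) (L x y)) ∧
    (∀ E F G : Set Ω, γ (symmDiff E F) = γ (symmDiff (symmDiff E G) (symmDiff F G))) :=
  stmt15_general R hR T L γ hγ
end
end

section
/- Let φ : [0,1] → [0,∞] be continuous, strictly decreasing, convex, with φ(1) = 0, and let C(u,v) = φ^{[−1]}(φ(u)+φ(v)) be the associated Archimedean copula, where φ^{[−1]}(x) = φ⁻¹(min(φ(0), x)). If η is a numerical submeasure on a ring Σ, then γ defined by γ_E(x) = φ^{[−1]}(η(E) − x) for x > 0 (interpreting η(E) − x as max(η(E) − x, 0) ∈ [0,∞], with φ^{[−1]}(s)=1 for s ≤ 0) is a τ_C-submeasure: γ_∅ = ε_0, γ is antitone under inclusion, and γ_{E∪F}(x+y) ≥ C(γ_E(x), γ_F(y)) for all x,y > 0. -/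
open Set
open scoped ENNReal Classical

noncomputable section

theorem min_add_le_min_add_min {α : Type*} [AddCommMonoid α] [LinearOrder α]
    [CanonicallyOrderedAdd α] (c a b : α) : min c (a + b) ≤ min c a + min c b := by
  rcases le_total c a with ha | ha
  · exact (min_le_left _ _).trans ((min_eq_left ha).ge.trans le_self_add)
  rcases le_total c b with hb | hb
  · exact (min_le_left _ _).trans ((min_eq_left hb).ge.trans le_add_self)
  · rw [min_eq_right ha, min_eq_right hb]
    exact min_le_right _ _

section PseudoInverse

variable {φ : ℝ → ℝ≥0∞} {φinv : ℝ≥0∞ → ℝ}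
  (hφinv_left : ∀ x ∈ Icc (0:ℝ) 1, φinv (φ x) = x)
  (hφinv_right : ∀ y, φ (φinv y) = min (φ 0) y)
  (hφinv_mem : ∀ y, φinv y ∈ Icc (0:ℝ) 1)

include hφinv_left hφinv_right hφinv_mem in
theorem pseudoInv_min_eq (t : ℝ≥0∞) : φinv (min (φ 0) t) = φinv t := by
  rw [← hφinv_right, hφinv_left _ (hφinv_mem t)]

-- `φ ∘ φinv` is truncation at `φ 0`, which is subadditive.
include hφinv_left hφinv_right hφinv_mem in
theorem archimedean_pseudoInv_le (hφinv_anti : Antitone φinv) {a b t : ℝ≥0∞}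
    (h : t ≤ a + b) : φinv (φ (φinv a) + φ (φinv b)) ≤ φinv t := by
  rw [hφinv_right, hφinv_right, ← pseudoInv_min_eq hφinv_left hφinv_right hφinv_mem t]
  exact hφinv_anti ((min_le_min_left _ h).trans (min_add_le_min_add_min _ _ _))

end PseudoInverse

def distrOfLevel (g : ℝ≥0∞ → ℝ) (s : ℝ≥0∞) (x : ℝ) : ℝ :=
  if 0 < x then g (s - ENNReal.ofReal x) else 0

section DistrOfLevel

variable {g : ℝ≥0∞ → ℝ}

theorem distrOfLevel_of_pos (s : ℝ≥0∞) {x : ℝ} (hx : 0 < x) :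
    distrOfLevel g s x = g (s - ENNReal.ofReal x) :=
  if_pos hx

theorem isDistrFn_distrOfLevel (hg : Antitone g) (hg_mem : ∀ y, g y ∈ Icc (0:ℝ) 1)
    (s : ℝ≥0∞) : IsDistrFn (distrOfLevel g s) := by
  refine ⟨fun x y hxy => ?_, fun x hx => if_neg hx.not_gt, fun x => ?_⟩
  · by_cases hx : 0 < x
    · rw [distrOfLevel_of_pos s hx, distrOfLevel_of_pos s (hx.trans_le hxy)]
      exact hg (tsub_le_tsub_left (ENNReal.ofReal_le_ofReal hxy) _)
    · rw [distrOfLevel, if_neg hx, distrOfLevel]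
      split_ifs
      exacts [(hg_mem _).1, le_rfl]
  · unfold distrOfLevel
    split_ifs
    exacts [(hg_mem _).2, zero_le_one]

theorem distrOfLevel_zero (hg0 : g 0 = 1) : distrOfLevel g 0 = eps0 := by
  ext x
  simp only [distrOfLevel, eps0, zero_tsub, hg0]

theorem distrOfLevel_anti (hg : Antitone g) {s s' : ℝ≥0∞} (h : s ≤ s') (x : ℝ) :
    distrOfLevel g s' x ≤ distrOfLevel g s x := by
  unfold distrOfLevel
  split_ifs
  exacts [hg (tsub_le_tsub_right h _), le_rfl]

end DistrOfLevel

theorem stmt16_general {Ω : Type*} (R : Set (Set Ω))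
    (φ : ℝ → ℝ≥0∞) (φinv : ℝ≥0∞ → ℝ) (hφ1 : φ 1 = 0)
    (hφinv_left : ∀ x ∈ Icc (0:ℝ) 1, φinv (φ x) = x)
    (hφinv_right : ∀ y, φ (φinv y) = min (φ 0) y)
    (hφinv_mem : ∀ y, φinv y ∈ Icc (0:ℝ) 1) (hφinv_anti : Antitone φinv)
    (η : Set Ω → ℝ≥0∞) (hη : IsNumSubmeasure R η) :
    IsTauSub R (· + ·) (fun u v => φinv (φ u + φ v))
      (fun E x => if 0 < x then φinv (η E - ENNReal.ofReal x) else 0) := by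
  obtain ⟨hη_empty, hη_mono, hη_subadd⟩ := hη
  have hφinv_zero : φinv 0 = 1 := by simpa [hφ1] using hφinv_left 1 (by simp)
  change IsTauSub R _ _ fun E => distrOfLevel φinv (η E)
  refine ⟨fun E _ => isDistrFn_distrOfLevel hφinv_anti hφinv_mem (η E),
    fun x => by dsimp only; rw [hη_empty, distrOfLevel_zero hφinv_zero],
    fun E F hE hF hEF => distrOfLevel_anti hφinv_anti (hη_mono E F hE hF hEF),
    fun E F hE hF x y hx hy => ?_⟩
  dsimp only
  rw [distrOfLevel_of_pos _ hx, distrOfLevel_of_pos _ hy, distrOfLevel_of_pos _ (add_pos hx hy)]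
  refine archimedean_pseudoInv_le hφinv_left hφinv_right hφinv_mem hφinv_anti ?_
  calc η (E ∪ F) - ENNReal.ofReal (x + y)
      ≤ η E + η F - (ENNReal.ofReal x + ENNReal.ofReal y) := by
        rw [ENNReal.ofReal_add hx.le hy.le]
        exact tsub_le_tsub_right (hη_subadd E F hE hF) _
    _ ≤ η E - ENNReal.ofReal x + (η F - ENNReal.ofReal y) := add_tsub_add_le_tsub_add_tsub

/-- for an additive generator `φ` (continuous, strictly decreasing,
convex, `φ 1 = 0`, with pseudo-inverse `φinv`) of an Archimedean copula
`C(u,v) = φinv (φ u + φ v)`, and a numerical submeasure `η`, the map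
`γ_E(x) = φinv (η E - x)` is a `τ_C`-submeasure. -/
theorem stmt16 {Ω : Type*} (R : Set (Set Ω)) (hR : IsSetRing R)
    (φ : ℝ → ℝ≥0∞) (φinv : ℝ≥0∞ → ℝ)
    (hφc : ContinuousOn φ (Icc 0 1)) (hφa : StrictAntiOn φ (Icc 0 1)) (hφ1 : φ 1 = 0)
    (hφconv : ∀ x ∈ Icc (0:ℝ) 1, ∀ y ∈ Icc (0:ℝ) 1, ∀ s u : ℝ,
      0 ≤ s → 0 ≤ u → s + u = 1 →
        φ (s * x + u * y) ≤ ENNReal.ofReal s * φ x + ENNReal.ofReal u * φ y)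
    (hφinv_left : ∀ x ∈ Icc (0:ℝ) 1, φinv (φ x) = x)
    (hφinv_right : ∀ y, φ (φinv y) = min (φ 0) y)
    (hφinv_mem : ∀ y, φinv y ∈ Icc (0:ℝ) 1) (hφinv_anti : Antitone φinv)
    (η : Set Ω → ℝ≥0∞) (hη : IsNumSubmeasure R η) :
    IsTauSub R (· + ·) (fun u v => φinv (φ u + φ v))
      (fun E x => if 0 < x then φinv (η E - ENNReal.ofReal x) else 0) :=
  stmt16_general R φ φinv hφ1 hφinv_left hφinv_right hφinv_mem hφinv_anti η hη
end
end

section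
/- Let η be a numerical submeasure on a ring Σ and λ ≥ 1. Define γ_E(x) = exp(−(max(η(E)−x, 0))^{1/λ}) for x > 0. Then γ is a τ_{C}-submeasure for the Gumbel–Hougaard copula C(u,v) = exp(−((−ln u)^λ + (−ln v)^λ)^{1/λ}) (with C(u,v)=0 if u=0 or v=0): γ_∅ = ε_0, γ antitone, and γ_{E∪F}(x+y) ≥ C(γ_E(x), γ_F(y)) for all x,y > 0. -/
/-!
Write `γ_E(x) = exp (-a ^ (1/λ))` with `a = max (η E - x) 0`. On such values the Gumbel–Hougaard
copula simply adds the exponents: `C (exp (-a ^ (1/λ))) (exp (-b ^ (1/λ))) = exp (-(a + b) ^ (1/λ))`.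
Since `t ↦ exp (-t ^ (1/λ))` is antitone on `[0, ∞)`, the triangle inequality reduces to
`max (η (E ∪ F) - x - y) 0 ≤ max (η E - x) 0 + max (η F - y) 0`, i.e. to subadditivity of `η`.
-/

open Set
open scoped ENNReal Classical

noncomputable section

/-- The Gumbel–Hougaard copula with parameter `lam` (value `0` if `u = 0` or `v = 0`). -/
def gumbel (lam : ℝ) (u v : ℝ) : ℝ :=
  if u = 0 ∨ v = 0 then 0
  else Real.exp (-(((-Real.log u) ^ lam + (-Real.log v) ^ lam) ^ (1 / lam)))

/-- The distribution function `γ_E` of the theorem, as a function of `t = η E`. -/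
def gumbelProfile (lam : ℝ) (t : ℝ≥0∞) (x : ℝ) : ℝ :=
  if x ≤ 0 ∨ t = ∞ then 0 else Real.exp (-((max (t.toReal - x) 0) ^ (1 / lam)))

lemma exp_neg_rpow_le_exp_neg_rpow {lam a b : ℝ} (hlam : 0 ≤ lam) (ha : 0 ≤ a) (hab : a ≤ b) :
    Real.exp (-b ^ (1 / lam)) ≤ Real.exp (-a ^ (1 / lam)) := by
  gcongr

lemma gumbel_zero_left (lam v : ℝ) : gumbel lam 0 v = 0 := if_pos (Or.inl rfl)

lemma gumbel_zero_right (lam u : ℝ) : gumbel lam u 0 = 0 := if_pos (Or.inr rfl)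

lemma gumbel_exp_neg_rpow {lam a b : ℝ} (hlam : lam ≠ 0) (ha : 0 ≤ a) (hb : 0 ≤ b) :
    gumbel lam (Real.exp (-a ^ (1 / lam))) (Real.exp (-b ^ (1 / lam))) =
      Real.exp (-(a + b) ^ (1 / lam)) := by
  rw [gumbel, if_neg (by simp [Real.exp_ne_zero]), Real.log_exp, Real.log_exp, neg_neg, neg_neg,
    ← Real.rpow_mul ha, ← Real.rpow_mul hb, one_div_mul_cancel hlam, Real.rpow_one,
    Real.rpow_one]

namespace gumbelProfile

variable {lam : ℝ}

lemma nonneg (t : ℝ≥0∞) (x : ℝ) : 0 ≤ gumbelProfile lam t x := by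
  unfold gumbelProfile
  split_ifs
  exacts [le_rfl, (Real.exp_pos _).le]

lemma le_one (t : ℝ≥0∞) (x : ℝ) : gumbelProfile lam t x ≤ 1 := by
  unfold gumbelProfile
  split_ifs
  exacts [zero_le_one, Real.exp_le_one_iff.mpr (neg_nonpos.mpr (by positivity))]

lemma monotone (hlam : 0 ≤ lam) (t : ℝ≥0∞) : Monotone (gumbelProfile lam t) := by
  intro x y hxy
  unfold gumbelProfile
  split_ifs with hx hy hy
  · exact le_rfl
  · exact (Real.exp_pos _).le
  · exact absurd (hy.imp (fun h => hxy.trans h) id) hx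
  · exact exp_neg_rpow_le_exp_neg_rpow hlam (le_max_right _ _) (by gcongr)

lemma isDistrFn (hlam : 0 ≤ lam) (t : ℝ≥0∞) : IsDistrFn (gumbelProfile lam t) :=
  ⟨monotone hlam t, fun _ hx => if_pos (Or.inl hx), le_one t⟩

lemma anti_left (hlam : 0 ≤ lam) {s t : ℝ≥0∞} (hst : s ≤ t) (x : ℝ) :
    gumbelProfile lam t x ≤ gumbelProfile lam s x := by
  unfold gumbelProfile
  by_cases ht : x ≤ 0 ∨ t = ∞
  · rw [if_pos ht]
    exact nonneg s x
  obtain ⟨hx, ht_top⟩ := not_or.mp ht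
  rw [if_neg ht, if_neg (not_or.mpr ⟨hx, ne_top_of_le_ne_top ht_top hst⟩)]
  exact exp_neg_rpow_le_exp_neg_rpow hlam (le_max_right _ _) (by gcongr)

lemma zero_left (hlam : lam ≠ 0) : gumbelProfile lam 0 = eps0 := by
  ext x
  unfold gumbelProfile eps0
  by_cases hx : 0 < x
  · rw [if_neg (by simp [hx]), if_pos hx, ENNReal.toReal_zero, zero_sub,
      max_eq_right (by linarith), Real.zero_rpow (one_div_ne_zero hlam), neg_zero, Real.exp_zero]
  · rw [if_pos (Or.inl (not_lt.mp hx)), if_neg hx]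

lemma gumbel_le (hlam : 0 < lam) {s t u : ℝ≥0∞} (hu : u ≤ s + t) {x y : ℝ} (hx : 0 < x)
    (hy : 0 < y) :
    gumbel lam (gumbelProfile lam s x) (gumbelProfile lam t y) ≤ gumbelProfile lam u (x + y) := by
  by_cases hs : s = ∞
  · simpa [gumbelProfile, hs, gumbel_zero_left] using nonneg u (x + y)
  by_cases ht : t = ∞
  · simpa [gumbelProfile, ht, gumbel_zero_right] using nonneg u (x + y)
  have hu_ne_top : u ≠ ∞ := ne_top_of_le_ne_top (ENNReal.add_ne_top.mpr ⟨hs, ht⟩) hu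
  have hu_le : u.toReal ≤ s.toReal + t.toReal := by
    rw [← ENNReal.toReal_add hs ht]
    exact ENNReal.toReal_mono (ENNReal.add_ne_top.mpr ⟨hs, ht⟩) hu
  simp only [gumbelProfile, hs, ht, hu_ne_top, not_le.mpr hx, not_le.mpr hy,
    not_le.mpr (add_pos hx hy), or_self, if_false]
  rw [gumbel_exp_neg_rpow hlam.ne' (le_max_right _ _) (le_max_right _ _)]
  refine exp_neg_rpow_le_exp_neg_rpow hlam.le (le_max_right _ _) (max_le ?_ (by positivity))
  linarith [le_max_left (s.toReal - x) 0, le_max_left (t.toReal - y) 0]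

end gumbelProfile

theorem stmt17_general {Ω : Type*} (R : Set (Set Ω))
    (η : Set Ω → ℝ≥0∞) (hη : IsNumSubmeasure R η) (lam : ℝ) (hlam : 1 ≤ lam) :
    IsTauSub R (· + ·) (gumbel lam)
      (fun E x => if x ≤ 0 ∨ η E = ∞ then 0
        else Real.exp (-((max ((η E).toReal - x) 0) ^ (1 / lam)))) := by
  obtain ⟨hη_empty, hη_mono, hη_union⟩ := hη
  have hlam_pos : 0 < lam := zero_lt_one.trans_le hlam
  refine ⟨fun E _ => gumbelProfile.isDistrFn hlam_pos.le (η E), fun x => ?_,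
    fun E F hE hF hEF => gumbelProfile.anti_left hlam_pos.le (hη_mono E F hE hF hEF),
    fun E F hE hF _ _ hx hy => gumbelProfile.gumbel_le hlam_pos (hη_union E F hE hF) hx hy⟩
  change gumbelProfile lam (η ∅) x = eps0 x
  rw [hη_empty, gumbelProfile.zero_left hlam_pos.ne']

/-- `γ_E(x) = exp (-(max (η E - x) 0) ^ (1/λ))` is a `τ_C`-submeasure for
the Gumbel–Hougaard copula, for every `λ ≥ 1`. -/
theorem stmt17 {Ω : Type*} (R : Set (Set Ω)) (hR : IsSetRing R)
    (η : Set Ω → ℝ≥0∞) (hη : IsNumSubmeasure R η) (lam : ℝ) (hlam : 1 ≤ lam) :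
    IsTauSub R (· + ·) (gumbel lam)
      (fun E x => if x ≤ 0 ∨ η E = ∞ then 0
        else Real.exp (-((max ((η E).toReal - x) 0) ^ (1 / lam)))) :=
  stmt17_general R η hη lam hlam
end
end

section
/- For semi-copulas S₁, S₂ on [0,1], define Θ_S as the set of τ_S-submeasures on a fixed ring Σ. Then Θ_{S₁} ∩ Θ_{S₂} = Θ_{S₁ ∨ S₂} and Θ_{S₁} ∪' Θ_{S₂} ⊆ Θ_{S₁ ∧ S₂}, where ∨, ∧ are pointwise max and min. More precisely: (a) γ ∈ Θ_{S₁} and γ ∈ Θ_{S₂} if and only if γ ∈ Θ_{S₁∨S₂}; (b) if γ ∈ Θ_{S₁} or γ ∈ Θ_{S₂} then γ ∈ Θ_{S₁∧S₂}. Moreover the pointwise max and min of two semi-copulas are semi-copulas. -/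
open Set
open scoped ENNReal Classical

noncomputable section

def IsSemicopula (S : ℝ → ℝ → ℝ) : Prop :=
  (∀ u u' v, u ∈ Icc (0:ℝ) 1 → u' ∈ Icc (0:ℝ) 1 → v ∈ Icc (0:ℝ) 1 → u ≤ u' →
    S u v ≤ S u' v) ∧
  (∀ u v v', u ∈ Icc (0:ℝ) 1 → v ∈ Icc (0:ℝ) 1 → v' ∈ Icc (0:ℝ) 1 → v ≤ v' →
    S u v ≤ S u v') ∧
  (∀ u ∈ Icc (0:ℝ) 1, S u 1 = u ∧ S 1 u = u) ∧
  (∀ u v, u ∈ Icc (0:ℝ) 1 → v ∈ Icc (0:ℝ) 1 → S u v ∈ Icc (0:ℝ) 1)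

section TauSub

variable {Ω : Type*} {R : Set (Set Ω)} {L A B : ℝ → ℝ → ℝ} {γ : Set Ω → ℝ → ℝ}

theorem IsTauSub.of_le (h : IsTauSub R L B γ) (hAB : ∀ u v, A u v ≤ B u v) :
    IsTauSub R L A γ :=
  let ⟨hdistr, hempty, hanti, htri⟩ := h
  ⟨hdistr, hempty, hanti, fun E F hE hF x y hx hy =>
    (hAB _ _).trans (htri E F hE hF x y hx hy)⟩

theorem isTauSub_max_iff :
    IsTauSub R L (fun u v => max (A u v) (B u v)) γ ↔ IsTauSub R L A γ ∧ IsTauSub R L B γ := by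
  refine ⟨fun h => ⟨h.of_le fun _ _ => le_max_left _ _, h.of_le fun _ _ => le_max_right _ _⟩, ?_⟩
  rintro ⟨⟨hdistr, hempty, hanti, htriA⟩, ⟨-, -, -, htriB⟩⟩
  exact ⟨hdistr, hempty, hanti, fun E F hE hF x y hx hy =>
    max_le (htriA E F hE hF x y hx hy) (htriB E F hE hF x y hx hy)⟩

theorem IsTauSub.min_of_or (h : IsTauSub R L A γ ∨ IsTauSub R L B γ) :
    IsTauSub R L (fun u v => min (A u v) (B u v)) γ :=
  h.elim (·.of_le fun _ _ => min_le_left _ _) (·.of_le fun _ _ => min_le_right _ _)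

end TauSub

namespace IsSemicopula

variable {S₁ S₂ : ℝ → ℝ → ℝ}

theorem max (h₁ : IsSemicopula S₁) (h₂ : IsSemicopula S₂) :
    IsSemicopula (fun u v => max (S₁ u v) (S₂ u v)) := by
  obtain ⟨mono₁, mono₁', bdry₁, range₁⟩ := h₁
  obtain ⟨mono₂, mono₂', bdry₂, range₂⟩ := h₂
  refine ⟨fun u u' v hu hu' hv huu' => ?_, fun u v v' hu hv hv' hvv' => ?_,
    fun u hu => ?_, fun u v hu hv => ?_⟩
  · exact max_le_max (mono₁ u u' v hu hu' hv huu') (mono₂ u u' v hu hu' hv huu')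
  · exact max_le_max (mono₁' u v v' hu hv hv' hvv') (mono₂' u v v' hu hv hv' hvv')
  · simp only [(bdry₁ u hu).1, (bdry₁ u hu).2, (bdry₂ u hu).1, (bdry₂ u hu).2, max_self,
      and_self]
  · exact ⟨le_max_of_le_left (range₁ u v hu hv).1,
      max_le (range₁ u v hu hv).2 (range₂ u v hu hv).2⟩

theorem min (h₁ : IsSemicopula S₁) (h₂ : IsSemicopula S₂) :
    IsSemicopula (fun u v => min (S₁ u v) (S₂ u v)) := by
  obtain ⟨mono₁, mono₁', bdry₁, range₁⟩ := h₁
  obtain ⟨mono₂, mono₂', bdry₂, range₂⟩ := h₂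
  refine ⟨fun u u' v hu hu' hv huu' => ?_, fun u v v' hu hv hv' hvv' => ?_,
    fun u hu => ?_, fun u v hu hv => ?_⟩
  · exact min_le_min (mono₁ u u' v hu hu' hv huu') (mono₂ u u' v hu hu' hv huu')
  · exact min_le_min (mono₁' u v v' hu hv hv' hvv') (mono₂' u v v' hu hv hv' hvv')
  · simp only [(bdry₁ u hu).1, (bdry₁ u hu).2, (bdry₂ u hu).1, (bdry₂ u hu).2, min_self,
      and_self]
  · exact ⟨le_min (range₁ u v hu hv).1 (range₂ u v hu hv).1,
      min_le_of_left_le (range₁ u v hu hv).2⟩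

end IsSemicopula

theorem stmt18_general {Ω : Type*} (R : Set (Set Ω))
    (S₁ S₂ : ℝ → ℝ → ℝ) (h1 : IsSemicopula S₁) (h2 : IsSemicopula S₂) :
    (∀ γ : Set Ω → ℝ → ℝ,
      (IsTauSub R (· + ·) S₁ γ ∧ IsTauSub R (· + ·) S₂ γ) ↔
        IsTauSub R (· + ·) (fun u v => max (S₁ u v) (S₂ u v)) γ) ∧
    (∀ γ : Set Ω → ℝ → ℝ,
      (IsTauSub R (· + ·) S₁ γ ∨ IsTauSub R (· + ·) S₂ γ) →
        IsTauSub R (· + ·) (fun u v => min (S₁ u v) (S₂ u v)) γ) ∧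
    IsSemicopula (fun u v => max (S₁ u v) (S₂ u v)) ∧
    IsSemicopula (fun u v => min (S₁ u v) (S₂ u v)) :=
  ⟨fun _ => isTauSub_max_iff.symm, fun _ => IsTauSub.min_of_or, h1.max h2, h1.min h2⟩

/-- (a) `γ ∈ Θ_{S₁} ∩ Θ_{S₂} ↔ γ ∈ Θ_{S₁ ∨ S₂}`;
(b) `γ ∈ Θ_{S₁} ∪ Θ_{S₂} → γ ∈ Θ_{S₁ ∧ S₂}`; moreover pointwise max and min of two
semi-copulas are semi-copulas. -/
theorem stmt18 {Ω : Type*} (R : Set (Set Ω)) (hR : IsSetRing R)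
    (S₁ S₂ : ℝ → ℝ → ℝ) (h1 : IsSemicopula S₁) (h2 : IsSemicopula S₂) :
    (∀ γ : Set Ω → ℝ → ℝ,
      (IsTauSub R (· + ·) S₁ γ ∧ IsTauSub R (· + ·) S₂ γ) ↔
        IsTauSub R (· + ·) (fun u v => max (S₁ u v) (S₂ u v)) γ) ∧
    (∀ γ : Set Ω → ℝ → ℝ,
      (IsTauSub R (· + ·) S₁ γ ∨ IsTauSub R (· + ·) S₂ γ) →
        IsTauSub R (· + ·) (fun u v => min (S₁ u v) (S₂ u v)) γ) ∧
    IsSemicopula (fun u v => max (S₁ u v) (S₂ u v)) ∧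
    IsSemicopula (fun u v => min (S₁ u v) (S₂ u v)) :=
  stmt18_general R S₁ S₂ h1 h2
end
end
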